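/- arXiv:2103.01473 — 4 statements merged into one kernel-verified Lean document; each statement's English description precedes it below -/
import Mathlib

section
/- Suppose cos θ0 = sin θ0 · sin θ1. Then for every time t ∈ ℕ, the second moment of the open quantum walk satisfies E₂(t) = s0⁴·c1²·(1 + 3·s1²)·t² + s0²·(1 + s1² − s0²·c1²·(1 + 3·s1²))·t, where c0 = cos θ0, s0 = sin θ0, c1 = cos θ1, s1 = sin θ1. -/
/-! Pass to the Heisenberg picture. Against an observable `X`, one step of the walk acts on the
weighted moments through `Φ* X = Pᴴ X P + Qᴴ X Q`, and re-centring the position weight `x ↦ x ± 1`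
produces the drift `Ψ* X = Qᴴ X Q - Pᴴ X P`. When `cos θ0 = sin θ0 sin θ1` both Kraus operators are
real symmetric in `s = sin θ0 sin θ1`, `u = sin θ0 cos θ1` with `2 s² + u² = 1`, and for
`D = Ψ* 1` one checks `Φ* 1 = 1`, `Φ* D = D`, `Ψ* D = v • 1` with `v = u² (1 + 2 s²)`. Hence
`∑ₓ x tr (D ρₜ(x)) = v t` and `E₂(t + 1) = E₂(t) + 2 v t + 1`, so `E₂(t) = v t² + (1 - v) t`. -/

open Matrix Complex Filter

/-- Local operation `P(θ0,θ1)`. -/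
noncomputable def Pmat (θ0 θ1 : ℝ) : Matrix (Fin 2) (Fin 2) ℂ :=
  !![0, (Real.cos θ0 : ℂ);
     ((Real.sin θ0 * Real.sin θ1 : ℝ) : ℂ), (-((Real.sin θ0 * Real.cos θ1 : ℝ) : ℂ))]

/-- Local operation `Q(θ0,θ1)`. -/
noncomputable def Qmat (θ0 θ1 : ℝ) : Matrix (Fin 2) (Fin 2) ℂ :=
  !![((Real.sin θ0 * Real.cos θ1 : ℝ) : ℂ), ((Real.sin θ0 * Real.sin θ1 : ℝ) : ℂ);
     (Real.cos θ0 : ℂ), 0]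

/-- The open quantum walk on ℤ with initial state `diagonal (p, 1-p)` at the origin. -/
noncomputable def owalk (θ0 θ1 p : ℝ) : ℕ → ℤ → Matrix (Fin 2) (Fin 2) ℂ
  | 0, x => if x = 0 then Matrix.diagonal ![(p : ℂ), ((1 - p : ℝ) : ℂ)] else 0
  | t + 1, x =>
      Pmat θ0 θ1 * owalk θ0 θ1 p t (x + 1) * (Pmat θ0 θ1)ᴴ
        + Qmat θ0 θ1 * owalk θ0 θ1 p t (x - 1) * (Qmat θ0 θ1)ᴴ

/-- Finding probability at position `x` at time `t`. -/
noncomputable def findprob (θ0 θ1 p : ℝ) (t : ℕ) (x : ℤ) : ℝ :=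
  ((owalk θ0 θ1 p t x).trace).re

/-- First moment (finite sum: the walk vanishes outside `[-t, t]`). -/
noncomputable def moment1 (θ0 θ1 p : ℝ) (t : ℕ) : ℝ :=
  ∑ x ∈ Finset.Icc (-(t : ℤ)) (t : ℤ), (x : ℝ) * findprob θ0 θ1 p t x

/-- Second moment. -/
noncomputable def moment2 (θ0 θ1 p : ℝ) (t : ℕ) : ℝ :=
  ∑ x ∈ Finset.Icc (-(t : ℤ)) (t : ℤ), (x : ℝ) ^ 2 * findprob θ0 θ1 p t x

/-- Standard deviation. -/
noncomputable def stdDev (θ0 θ1 p : ℝ) (t : ℕ) : ℝ :=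
  Real.sqrt (moment2 θ0 θ1 p t - (moment1 θ0 θ1 p t) ^ 2)

lemma sum_Icc_succ_comp_add {M : Type*} [AddCommMonoid M] (F : ℤ → M) (t : ℕ) (c : ℤ)
    (hc : |c| ≤ 1) (hF : ∀ y, (t : ℤ) < |y| → F y = 0) :
    ∑ x ∈ Finset.Icc (-((t + 1 : ℕ) : ℤ)) ((t + 1 : ℕ) : ℤ), F (x + c)
      = ∑ y ∈ Finset.Icc (-(t : ℤ)) t, F y := by
  have hshift : ∑ x ∈ Finset.Icc (-((t + 1 : ℕ) : ℤ)) ((t + 1 : ℕ) : ℤ), F (x + c)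
      = ∑ y ∈ Finset.Icc (-((t + 1 : ℕ) : ℤ) + c) ((t + 1 : ℕ) + c), F y := by
    rw [← Finset.map_add_right_Icc, Finset.sum_map]; rfl
  rw [hshift]
  obtain ⟨hc₁, hc₂⟩ := abs_le.mp hc
  refine (Finset.sum_subset (Finset.Icc_subset_Icc (by omega) (by omega)) fun y hy hy' => ?_).symm
  simp only [Finset.mem_Icc] at hy hy'
  exact hF y (lt_abs.mpr (by omega))

namespace OpenQuantumWalk

variable {n R : Type*} [Fintype n] [CommRing R]

lemma eq_zero_of_lt_abs [Star R] {P Q : Matrix n n R} {ρ : ℕ → ℤ → Matrix n n R}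
    (hρ : ∀ t x, ρ (t + 1) x = P * ρ t (x + 1) * Pᴴ + Q * ρ t (x - 1) * Qᴴ)
    (h0 : ∀ x ≠ 0, ρ 0 x = 0) (t : ℕ) (x : ℤ) (hx : (t : ℤ) < |x|) : ρ t x = 0 := by
  induction t generalizing x with
  | zero => exact h0 x (abs_pos.mp (by simpa using hx))
  | succ t ih =>
    have hx' := lt_abs.mp hx
    rw [hρ, ih (x + 1) (lt_abs.mpr (by omega)), ih (x - 1) (lt_abs.mpr (by omega))]
    simp

noncomputable def expect (ρ : ℕ → ℤ → Matrix n n R) (X : Matrix n n R) (f : ℤ → R) (t : ℕ) : R :=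
  ∑ x ∈ Finset.Icc (-(t : ℤ)) t, f x * (X * ρ t x).trace

lemma expect_zero (ρ : ℕ → ℤ → Matrix n n R) (X : Matrix n n R) (f : ℤ → R) :
    expect ρ X f 0 = f 0 * (X * ρ 0 0).trace := by
  simp [expect]

lemma expect_smul (ρ : ℕ → ℤ → Matrix n n R) (c : R) (X : Matrix n n R) (f : ℤ → R) (t : ℕ) :
    expect ρ (c • X) f t = c * expect ρ X f t := by
  simp only [expect, Finset.mul_sum, Matrix.smul_mul, Matrix.trace_smul, smul_eq_mul]
  exact Finset.sum_congr rfl fun _ _ => by ring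

variable [Star R] (P Q : Matrix n n R)

def dualChannel (X : Matrix n n R) : Matrix n n R := Pᴴ * X * P + Qᴴ * X * Q

def dualDrift (X : Matrix n n R) : Matrix n n R := Qᴴ * X * Q - Pᴴ * X * P

variable {P Q} {ρ : ℕ → ℤ → Matrix n n R}
  (hρ : ∀ t x, ρ (t + 1) x = P * ρ t (x + 1) * Pᴴ + Q * ρ t (x - 1) * Qᴴ)
  (h0 : ∀ x ≠ 0, ρ 0 x = 0)
include hρ h0

lemma expect_succ (X : Matrix n n R) (f : ℤ → R) (t : ℕ) :
    expect ρ X f (t + 1) = expect ρ (Pᴴ * X * P) (fun y => f (y - 1)) t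
      + expect ρ (Qᴴ * X * Q) (fun y => f (y + 1)) t := by
  have hvanish : ∀ (Y : Matrix n n R) (g : ℤ → R) y, (t : ℤ) < |y| → g y * (Y * ρ t y).trace = 0 :=
    fun Y g y hy => by simp [eq_zero_of_lt_abs hρ h0 t y hy]
  rw [expect, expect, expect, ← sum_Icc_succ_comp_add _ t 1 (by simp) (hvanish _ _),
    ← sum_Icc_succ_comp_add _ t (-1) (by simp) (hvanish _ _), ← Finset.sum_add_distrib]
  refine Finset.sum_congr rfl fun x _ => ?_
  rw [hρ, Matrix.mul_add, Matrix.trace_add, mul_add, ← sub_eq_add_neg, add_sub_cancel_right,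
    sub_add_cancel, Matrix.trace_mul_cycle', Matrix.trace_mul_cycle' X]
  simp only [Matrix.mul_assoc]

lemma expect_one_succ (X : Matrix n n R) (t : ℕ) :
    expect ρ X (fun _ => 1) (t + 1) = expect ρ (dualChannel P Q X) (fun _ => 1) t := by
  rw [expect_succ hρ h0]
  simp only [expect, dualChannel, ← Finset.sum_add_distrib, Matrix.add_mul, Matrix.trace_add,
    mul_add]

lemma expect_intCast_succ (X : Matrix n n R) (t : ℕ) :
    expect ρ X (fun x => (x : R)) (t + 1)
      = expect ρ (dualChannel P Q X) (fun x => (x : R)) t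
        + expect ρ (dualDrift P Q X) (fun _ => 1) t := by
  rw [expect_succ hρ h0]
  simp only [expect, dualChannel, dualDrift, ← Finset.sum_add_distrib]
  refine Finset.sum_congr rfl fun x _ => ?_
  simp only [Matrix.add_mul, Matrix.sub_mul, Matrix.trace_add, Matrix.trace_sub, Int.cast_add,
    Int.cast_sub, Int.cast_one]
  ring

lemma expect_intCast_sq_succ (X : Matrix n n R) (t : ℕ) :
    expect ρ X (fun x => (x : R) ^ 2) (t + 1)
      = expect ρ (dualChannel P Q X) (fun x => (x : R) ^ 2) t
        + 2 * expect ρ (dualDrift P Q X) (fun x => (x : R)) t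
        + expect ρ (dualChannel P Q X) (fun _ => 1) t := by
  rw [expect_succ hρ h0]
  simp only [expect, dualChannel, dualDrift, Finset.mul_sum, ← Finset.sum_add_distrib]
  refine Finset.sum_congr rfl fun x _ => ?_
  simp only [Matrix.add_mul, Matrix.sub_mul, Matrix.trace_add, Matrix.trace_sub, Int.cast_add,
    Int.cast_sub, Int.cast_one]
  ring

variable [DecidableEq n] {D : Matrix n n R} {v : R} (htrace : (ρ 0 0).trace = 1)
  (hΦ1 : dualChannel P Q 1 = 1) (hΨ1 : dualDrift P Q 1 = D)
  (hΦD : dualChannel P Q D = D) (hΨD : dualDrift P Q D = v • 1)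
include htrace hΦ1

lemma expect_one_one (t : ℕ) : expect ρ 1 (fun _ => 1) t = 1 := by
  induction t with
  | zero => rw [expect_zero, Matrix.one_mul, htrace, one_mul]
  | succ t ih => rw [expect_one_succ hρ h0, hΦ1, ih]

include hΦD hΨD in
lemma expect_intCast_of_dualDrift_eq_smul_one (t : ℕ) :
    expect ρ D (fun x => (x : R)) t = v * t := by
  induction t with
  | zero => simp [expect_zero]
  | succ t ih =>
    rw [expect_intCast_succ hρ h0, hΦD, hΨD, expect_smul, expect_one_one hρ h0 htrace hΦ1, ih]
    push_cast
    ring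

include hΨ1 hΦD hΨD in
lemma expect_intCast_sq_of_dualDrift_eq_smul_one (t : ℕ) :
    expect ρ 1 (fun x => (x : R) ^ 2) t = v * t ^ 2 + (1 - v) * t := by
  induction t with
  | zero => simp [expect_zero]
  | succ t ih =>
    rw [expect_intCast_sq_succ hρ h0, hΦ1, hΨ1, ih, expect_one_one hρ h0 htrace hΦ1,
      expect_intCast_of_dualDrift_eq_smul_one hρ h0 htrace hΦ1 hΦD hΨD]
    push_cast
    ring

end OpenQuantumWalk

open OpenQuantumWalk

section SymmetricKraus

variable (s u : ℝ)

def symPmat : Matrix (Fin 2) (Fin 2) ℂ := !![0, (s : ℂ); s, -u]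

def symQmat : Matrix (Fin 2) (Fin 2) ℂ := !![(u : ℂ), s; s, 0]

def driftObs : Matrix (Fin 2) (Fin 2) ℂ := !![(u : ℂ) ^ 2, 2 * u * s; 2 * u * s, -u ^ 2]

lemma conjTranspose_symPmat : (symPmat s u)ᴴ = symPmat s u := by
  ext i j; fin_cases i <;> fin_cases j <;> simp [symPmat]

lemma conjTranspose_symQmat : (symQmat s u)ᴴ = symQmat s u := by
  ext i j; fin_cases i <;> fin_cases j <;> simp [symQmat]

lemma dualDrift_sym_one : dualDrift (symPmat s u) (symQmat s u) 1 = driftObs s u := by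
  rw [dualDrift, conjTranspose_symPmat, conjTranspose_symQmat]
  simp only [symPmat, symQmat, driftObs, Matrix.one_fin_two, Matrix.mul_fin_two, Matrix.of_sub_of]
  ext i j; fin_cases i <;> fin_cases j <;> simp <;> ring

variable {s u} (hsu : 2 * (s : ℂ) ^ 2 + (u : ℂ) ^ 2 = 1)
include hsu

lemma dualChannel_sym_one : dualChannel (symPmat s u) (symQmat s u) 1 = 1 := by
  rw [dualChannel, conjTranspose_symPmat, conjTranspose_symQmat]
  simp only [symPmat, symQmat, Matrix.one_fin_two, Matrix.mul_fin_two, Matrix.of_add_of]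
  ext i j; fin_cases i <;> fin_cases j <;> simp
  · linear_combination hsu
  · ring
  · ring
  · linear_combination hsu

lemma dualChannel_sym_driftObs :
    dualChannel (symPmat s u) (symQmat s u) (driftObs s u) = driftObs s u := by
  rw [dualChannel, conjTranspose_symPmat, conjTranspose_symQmat]
  simp only [symPmat, symQmat, driftObs, Matrix.mul_fin_two, Matrix.of_add_of]
  ext i j; fin_cases i <;> fin_cases j <;> simp
  · linear_combination (u : ℂ) ^ 2 * hsu
  · linear_combination 2 * (u : ℂ) * s * hsu
  · linear_combination 2 * (u : ℂ) * s * hsu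
  · linear_combination -(u : ℂ) ^ 2 * hsu

lemma dualDrift_sym_driftObs :
    dualDrift (symPmat s u) (symQmat s u) (driftObs s u) = ((u : ℂ) ^ 2 * (1 + 2 * s ^ 2)) • 1 := by
  rw [dualDrift, conjTranspose_symPmat, conjTranspose_symQmat]
  simp only [symPmat, symQmat, driftObs, Matrix.one_fin_two, Matrix.mul_fin_two, Matrix.of_sub_of,
    Matrix.smul_of]
  ext i j; fin_cases i <;> fin_cases j <;> simp
  · linear_combination (u : ℂ) ^ 2 * hsu
  · ring
  · ring
  · linear_combination (u : ℂ) ^ 2 * hsu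

end SymmetricKraus

section Walk

variable {θ0 θ1 : ℝ}

lemma Pmat_eq_symPmat (h : Real.cos θ0 = Real.sin θ0 * Real.sin θ1) :
    Pmat θ0 θ1 = symPmat (Real.sin θ0 * Real.sin θ1) (Real.sin θ0 * Real.cos θ1) := by
  rw [Pmat, h, symPmat]

lemma Qmat_eq_symQmat (h : Real.cos θ0 = Real.sin θ0 * Real.sin θ1) :
    Qmat θ0 θ1 = symQmat (Real.sin θ0 * Real.sin θ1) (Real.sin θ0 * Real.cos θ1) := by
  rw [Qmat, h, symQmat]

variable (θ0 θ1) (p : ℝ)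

lemma owalk_zero_of_ne {x : ℤ} (hx : x ≠ 0) : owalk θ0 θ1 p 0 x = 0 := by
  simp [owalk, hx]

lemma trace_owalk_zero_zero : (owalk θ0 θ1 p 0 0).trace = 1 := by
  simp [owalk]

lemma moment2_eq_re_expect (t : ℕ) :
    moment2 θ0 θ1 p t = (expect (owalk θ0 θ1 p) 1 (fun x => (x : ℂ) ^ 2) t).re := by
  simp only [moment2, findprob, expect, Matrix.one_mul, Complex.re_sum]
  refine Finset.sum_congr rfl fun x _ => ?_
  rw [← Complex.ofReal_intCast, ← Complex.ofReal_pow, Complex.re_ofReal_mul]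

lemma moment2_eq_of_eq_sym {s u : ℝ} (hP : Pmat θ0 θ1 = symPmat s u)
    (hQ : Qmat θ0 θ1 = symQmat s u) (hsu : 2 * s ^ 2 + u ^ 2 = 1) (t : ℕ) :
    moment2 θ0 θ1 p t = u ^ 2 * (1 + 2 * s ^ 2) * t ^ 2 + (1 - u ^ 2 * (1 + 2 * s ^ 2)) * t := by
  have hρ : ∀ t x, owalk θ0 θ1 p (t + 1) x
      = symPmat s u * owalk θ0 θ1 p t (x + 1) * (symPmat s u)ᴴ
        + symQmat s u * owalk θ0 θ1 p t (x - 1) * (symQmat s u)ᴴ := by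
    intro t x
    rw [← hP, ← hQ, owalk]
  have hsuC : 2 * (s : ℂ) ^ 2 + (u : ℂ) ^ 2 = 1 := by exact_mod_cast hsu
  rw [moment2_eq_re_expect, expect_intCast_sq_of_dualDrift_eq_smul_one hρ
    (fun _ => owalk_zero_of_ne θ0 θ1 p) (trace_owalk_zero_zero θ0 θ1 p)
    (dualChannel_sym_one hsuC) (dualDrift_sym_one s u) (dualChannel_sym_driftObs hsuC)
    (dualDrift_sym_driftObs hsuC) t]
  norm_cast

end Walk

theorem owalk_moment2_eq_general (θ0 θ1 p : ℝ)
    (h : Real.cos θ0 = Real.sin θ0 * Real.sin θ1) :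
    ∀ t : ℕ, moment2 θ0 θ1 p t =
      Real.sin θ0 ^ 4 * Real.cos θ1 ^ 2 * (1 + 3 * Real.sin θ1 ^ 2) * t ^ 2
        + Real.sin θ0 ^ 2 *
          (1 + Real.sin θ1 ^ 2 - Real.sin θ0 ^ 2 * Real.cos θ1 ^ 2 * (1 + 3 * Real.sin θ1 ^ 2)) * t := by
  intro t
  have hs0 : Real.sin θ0 ^ 2 * (1 + Real.sin θ1 ^ 2) = 1 := by
    linear_combination Real.sin_sq_add_cos_sq θ0 - (Real.cos θ0 + Real.sin θ0 * Real.sin θ1) * h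
  rw [moment2_eq_of_eq_sym θ0 θ1 p (Pmat_eq_symPmat h) (Qmat_eq_symQmat h)
    (by linear_combination hs0 + Real.sin θ0 ^ 2 * Real.sin_sq_add_cos_sq θ1)]
  linear_combination -(Real.sin θ0 ^ 2 * Real.cos θ1 ^ 2 * (t ^ 2 - t) + t) * hs0

theorem owalk_moment2_eq (θ0 θ1 p : ℝ) (hp0 : 0 ≤ p) (hp1 : p ≤ 1)
    (h : Real.cos θ0 = Real.sin θ0 * Real.sin θ1) :
    ∀ t : ℕ, moment2 θ0 θ1 p t =
      Real.sin θ0 ^ 4 * Real.cos θ1 ^ 2 * (1 + 3 * Real.sin θ1 ^ 2) * t ^ 2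
        + Real.sin θ0 ^ 2 *
          (1 + Real.sin θ1 ^ 2 - Real.sin θ0 ^ 2 * Real.cos θ1 ^ 2 * (1 + 3 * Real.sin θ1 ^ 2)) * t :=
  owalk_moment2_eq_general θ0 θ1 p h
end

section
/- Suppose cos θ0 = sin θ0 · sin θ1 and cos θ1 ≠ 0. Then the open quantum walk is ballistic: the sequence σ(t)/t converges, as t → ∞, to s0²·|c1|·√(1 + 3·s1² − (2p − 1)²·c1²), where c0 = cos θ0, s0 = sin θ0, c1 = cos θ1, s1 = sin θ1. -/
open Matrix Complex Filter

/-!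
In the Heisenberg picture one step of the walk sends an observable field `F : ℤ → Matrix` to
`x ↦ Pᴴ F(x-1) P + Qᴴ F(x+1) Q`. Besides trace preservation `PᴴP + QᴴQ = 1`, the condition
`cos θ0 = sin θ0 sin θ1` makes `W = QᴴQ - PᴴP` satisfy `PᴴWP + QᴴWQ = W` and
`QᴴWQ - PᴴWP = α • 1` with `α = s0⁴c1²(1 + 3s1²)`, so the moment hierarchy closes:
`E₁(t) = tr(Wρ₀) t` and `E₂(t) = α t² + (1 - α) t`. Hence
`σ(t)²/t² → α - tr(Wρ₀)² = s0⁴c1²(1 + 3s1² - (2p-1)²c1²)`.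
-/

open Finset Topology

theorem sum_Icc_shift_of_abs_le_one {M : Type*} [AddCommMonoid M] (N : ℤ) (g : ℤ → M)
    (hg : ∀ y ∉ Icc (-N) N, g y = 0) {c : ℤ} (hc : |c| ≤ 1) :
    ∑ x ∈ Icc (-(N + 1)) (N + 1), g (x + c) = ∑ y ∈ Icc (-N) N, g y := by
  calc ∑ x ∈ Icc (-(N + 1)) (N + 1), g (x + c)
      = ∑ y ∈ Icc (-(N + 1) + c) (N + 1 + c), g y := by rw [← map_add_right_Icc, sum_map]; rfl
    _ = ∑ y ∈ Icc (-N) N, g y := by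
      refine (sum_subset (fun y hy => ?_) fun y _ hy => hg y hy).symm
      rw [abs_le] at hc
      simp only [mem_Icc] at hy ⊢
      omega

theorem tendsto_sqrt_quadratic_div_atTop (a b : ℝ) :
    Tendsto (fun t : ℕ => √(a * t ^ 2 + b * t) / t) atTop (𝓝 √a) := by
  have hlim : Tendsto (fun t : ℕ => √(a + b / t)) atTop (𝓝 √a) := by
    simpa using ((tendsto_const_div_atTop_nhds_zero_nat b).const_add a).sqrt
  refine hlim.congr' ?_
  filter_upwards [eventually_gt_atTop 0] with t ht
  have ht : (0 : ℝ) < t := by exact_mod_cast ht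
  calc √(a + b / t) = √((a * t ^ 2 + b * t) / t ^ 2) := by congr 1; field_simp
    _ = √(a * t ^ 2 + b * t) / t := by rw [Real.sqrt_div' _ (sq_nonneg _), Real.sqrt_sq ht.le]

section OpenQuantumWalk

variable {n R : Type*} [Fintype n] [CommRing R] [Star R]

noncomputable def openWalk (B C ρ₀ : Matrix n n R) : ℕ → ℤ → Matrix n n R
  | 0, x => if x = 0 then ρ₀ else 0
  | t + 1, x => B * openWalk B C ρ₀ t (x + 1) * Bᴴ + C * openWalk B C ρ₀ t (x - 1) * Cᴴ

variable (B C ρ₀ : Matrix n n R)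

theorem openWalk_eq_zero_of_notMem (t : ℕ) {x : ℤ} (hx : x ∉ Icc (-(t : ℤ)) t) :
    openWalk B C ρ₀ t x = 0 := by
  induction t generalizing x with
  | zero => simp_all [openWalk]
  | succ t ih =>
    simp only [mem_Icc, not_and_or, not_le] at hx
    rw [openWalk, ih (by simp; omega), ih (by simp; omega)]
    simp

noncomputable def walkExpect (t : ℕ) (F : ℤ → Matrix n n R) : R :=
  ∑ x ∈ Icc (-(t : ℤ)) t, trace (F x * openWalk B C ρ₀ t x)

theorem walkExpect_zero (F : ℤ → Matrix n n R) :
    walkExpect B C ρ₀ 0 F = trace (F 0 * ρ₀) := by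
  simp [walkExpect, openWalk]

theorem walkExpect_add (t : ℕ) (F G : ℤ → Matrix n n R) :
    walkExpect B C ρ₀ t (fun x => F x + G x) =
      walkExpect B C ρ₀ t F + walkExpect B C ρ₀ t G := by
  simp only [walkExpect, Matrix.add_mul, trace_add, sum_add_distrib]

theorem walkExpect_smul (t : ℕ) (c : R) (F : ℤ → Matrix n n R) :
    walkExpect B C ρ₀ t (fun x => c • F x) = c * walkExpect B C ρ₀ t F := by
  simp only [walkExpect, Matrix.smul_mul, trace_smul, smul_eq_mul, mul_sum]

theorem walkExpect_succ (t : ℕ) (F : ℤ → Matrix n n R) :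
    walkExpect B C ρ₀ (t + 1) F =
      walkExpect B C ρ₀ t (fun x => Bᴴ * F (x - 1) * B + Cᴴ * F (x + 1) * C) := by
  have cycle : ∀ (K M : Matrix n n R) (x : ℤ),
      trace (F x * (K * M * Kᴴ)) = trace (Kᴴ * F x * K * M) := fun K M x => by
    rw [← Matrix.mul_assoc, ← Matrix.mul_assoc, trace_mul_comm, ← Matrix.mul_assoc,
      ← Matrix.mul_assoc]
  have vanish : ∀ G : ℤ → Matrix n n R, ∀ y ∉ Icc (-(t : ℤ)) t,
      trace (G y * openWalk B C ρ₀ t y) = 0 := fun G y hy => by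
    rw [openWalk_eq_zero_of_notMem B C ρ₀ t hy, Matrix.mul_zero, trace_zero]
  simp only [walkExpect, openWalk, Matrix.mul_add, trace_add, cycle, sum_add_distrib,
    Matrix.add_mul, Nat.cast_succ]
  congr 1
  · simpa using sum_Icc_shift_of_abs_le_one (t : ℤ) _ (vanish fun y => Bᴴ * F (y - 1) * B)
      (c := 1) (by simp)
  · simpa [sub_eq_add_neg] using sum_Icc_shift_of_abs_le_one (t : ℤ) _
      (vanish fun y => Cᴴ * F (y + 1) * C) (c := -1) (by simp)

end OpenQuantumWalk

section Moments

variable {n R : Type*} [Fintype n] [CommRing R] [Star R] {B C ρ₀ A D W : Matrix n n R}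

theorem walkExpect_const_of_dual_fixed (hA : Bᴴ * A * B + Cᴴ * A * C = A) (t : ℕ) :
    walkExpect B C ρ₀ t (fun _ => A) = trace (A * ρ₀) := by
  induction t with
  | zero => exact walkExpect_zero B C ρ₀ _
  | succ t ih => rw [walkExpect_succ]; simpa only [hA] using ih

theorem dual_fixed_smul_one [DecidableEq n] (hI : Bᴴ * B + Cᴴ * C = 1) (c : R) :
    Bᴴ * (c • 1) * B + Cᴴ * (c • 1) * C = c • 1 := by
  simp only [Matrix.mul_smul, Matrix.smul_mul, Matrix.mul_one, ← smul_add, hI]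

theorem walkExpect_intCast_smul (hA : Bᴴ * A * B + Cᴴ * A * C = A)
    (hD : Cᴴ * A * C - Bᴴ * A * B = D) (hDfix : Bᴴ * D * B + Cᴴ * D * C = D) (t : ℕ) :
    walkExpect B C ρ₀ t (fun x => (x : R) • A) = t * trace (D * ρ₀) := by
  induction t with
  | zero => simp [walkExpect_zero]
  | succ t ih =>
    have dual : (fun x : ℤ => Bᴴ * (((x - 1 : ℤ) : R) • A) * B
          + Cᴴ * (((x + 1 : ℤ) : R) • A) * C) = fun x : ℤ => (x : R) • A + D := by
      funext x
      push_cast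
      simp only [Matrix.mul_smul, Matrix.smul_mul]
      linear_combination (norm := module) (x : R) • hA + hD
    rw [walkExpect_succ, dual, walkExpect_add, ih, walkExpect_const_of_dual_fixed hDfix]
    push_cast
    ring

theorem walkExpect_intCast_smul_one [DecidableEq n] (hI : Bᴴ * B + Cᴴ * C = 1)
    (hW : Cᴴ * C - Bᴴ * B = W) (hWfix : Bᴴ * W * B + Cᴴ * W * C = W) (t : ℕ) :
    walkExpect B C ρ₀ t (fun x => (x : R) • 1) = t * trace (W * ρ₀) :=
  walkExpect_intCast_smul (by simpa only [Matrix.mul_one] using hI)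
    (by simpa only [Matrix.mul_one] using hW) hWfix t

theorem walkExpect_intCast_sq_smul_one [DecidableEq n] {α : R} (hI : Bᴴ * B + Cᴴ * C = 1)
    (hW : Cᴴ * C - Bᴴ * B = W) (hWfix : Bᴴ * W * B + Cᴴ * W * C = W)
    (hWα : Cᴴ * W * C - Bᴴ * W * B = α • 1) (t : ℕ) :
    walkExpect B C ρ₀ t (fun x => (x : R) ^ 2 • 1) = (α * t ^ 2 + (1 - α) * t) * trace ρ₀ := by
  have hI' : Bᴴ * 1 * B + Cᴴ * 1 * C = 1 := by simpa only [Matrix.mul_one] using hI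
  induction t with
  | zero => simp [walkExpect_zero]
  | succ t ih =>
    have dual : (fun x : ℤ => Bᴴ * (((x - 1 : ℤ) : R) ^ 2 • 1) * B
          + Cᴴ * (((x + 1 : ℤ) : R) ^ 2 • 1) * C)
        = fun x : ℤ => ((x : R) ^ 2 • 1 + (2 : R) • (x : R) • W) + 1 := by
      funext x
      push_cast
      simp only [Matrix.mul_smul, Matrix.smul_mul, Matrix.mul_one]
      linear_combination (norm := module) ((x : R) ^ 2 + 1) • hI + (2 * x : R) • hW
    rw [walkExpect_succ, dual, walkExpect_add, walkExpect_add, walkExpect_smul, ih,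
      walkExpect_intCast_smul hWfix hWα (dual_fixed_smul_one hI α),
      walkExpect_const_of_dual_fixed hI']
    simp only [Matrix.smul_mul, Matrix.one_mul, trace_smul, smul_eq_mul]
    push_cast
    ring

end Moments

noncomputable def Wmat (θ0 θ1 : ℝ) : Matrix (Fin 2) (Fin 2) ℂ :=
  ((Real.sin θ0 ^ 2 * Real.cos θ1 : ℝ) : ℂ) •
    !![(Real.cos θ1 : ℂ), 2 * Real.sin θ1; 2 * Real.sin θ1, -Real.cos θ1]

noncomputable def secondMomentCoeff (θ0 θ1 : ℝ) : ℝ :=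
  Real.sin θ0 ^ 4 * Real.cos θ1 ^ 2 * (1 + 3 * Real.sin θ1 ^ 2)

noncomputable def meanVelocity (θ0 θ1 p : ℝ) : ℝ :=
  (2 * p - 1) * (Real.sin θ0 ^ 2 * Real.cos θ1 ^ 2)

noncomputable def initState (p : ℝ) : Matrix (Fin 2) (Fin 2) ℂ :=
  Matrix.diagonal ![(p : ℂ), ((1 - p : ℝ) : ℂ)]

section KrausRelations

variable (θ0 θ1 : ℝ)

theorem ofReal_sin_sq_add_ofReal_cos_sq (θ : ℝ) :
    (Real.sin θ : ℂ) ^ 2 + (Real.cos θ : ℂ) ^ 2 = 1 := by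
  exact_mod_cast Real.sin_sq_add_cos_sq θ

theorem Pmat_Qmat_trace_preserving :
    (Pmat θ0 θ1)ᴴ * Pmat θ0 θ1 + (Qmat θ0 θ1)ᴴ * Qmat θ0 θ1 = 1 := by
  have h0 := ofReal_sin_sq_add_ofReal_cos_sq θ0
  have h1 := ofReal_sin_sq_add_ofReal_cos_sq θ1
  ext i j
  fin_cases i <;> fin_cases j <;>
    simp [Pmat, Qmat, mul_apply, Fin.sum_univ_two, -ofReal_sin, -ofReal_cos] <;> grind

variable {θ0 θ1}

theorem Qmat_sub_Pmat_eq_Wmat (h : Real.cos θ0 = Real.sin θ0 * Real.sin θ1) :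
    (Qmat θ0 θ1)ᴴ * Qmat θ0 θ1 - (Pmat θ0 θ1)ᴴ * Pmat θ0 θ1 = Wmat θ0 θ1 := by
  have h : (Real.cos θ0 : ℂ) = Real.sin θ0 * Real.sin θ1 := by exact_mod_cast h
  have h1 := ofReal_sin_sq_add_ofReal_cos_sq θ1
  ext i j
  fin_cases i <;> fin_cases j <;>
    simp [Pmat, Qmat, Wmat, mul_apply, Fin.sum_univ_two, -ofReal_sin, -ofReal_cos] <;> grind

theorem Pmat_Qmat_dual_Wmat (h : Real.cos θ0 = Real.sin θ0 * Real.sin θ1) :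
    (Pmat θ0 θ1)ᴴ * Wmat θ0 θ1 * Pmat θ0 θ1 + (Qmat θ0 θ1)ᴴ * Wmat θ0 θ1 * Qmat θ0 θ1
      = Wmat θ0 θ1 := by
  have h : (Real.cos θ0 : ℂ) = Real.sin θ0 * Real.sin θ1 := by exact_mod_cast h
  have h0 := ofReal_sin_sq_add_ofReal_cos_sq θ0
  have h1 := ofReal_sin_sq_add_ofReal_cos_sq θ1
  ext i j
  fin_cases i <;> fin_cases j <;>
    simp [Pmat, Qmat, Wmat, mul_apply, Fin.sum_univ_two, -ofReal_sin, -ofReal_cos] <;> grind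

theorem Qmat_sub_Pmat_dual_Wmat (h : Real.cos θ0 = Real.sin θ0 * Real.sin θ1) :
    (Qmat θ0 θ1)ᴴ * Wmat θ0 θ1 * Qmat θ0 θ1 - (Pmat θ0 θ1)ᴴ * Wmat θ0 θ1 * Pmat θ0 θ1
      = (secondMomentCoeff θ0 θ1 : ℂ) • 1 := by
  have h : (Real.cos θ0 : ℂ) = Real.sin θ0 * Real.sin θ1 := by exact_mod_cast h
  have h1 := ofReal_sin_sq_add_ofReal_cos_sq θ1
  ext i j
  fin_cases i <;> fin_cases j <;>
    simp [Pmat, Qmat, Wmat, secondMomentCoeff, mul_apply, Fin.sum_univ_two, -ofReal_sin,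
      -ofReal_cos] <;> grind

end KrausRelations

theorem trace_initState (p : ℝ) : trace (initState p) = 1 := by
  simp [initState]

theorem trace_Wmat_mul_initState (θ0 θ1 p : ℝ) :
    trace (Wmat θ0 θ1 * initState p) = meanVelocity θ0 θ1 p := by
  simp [Wmat, initState, meanVelocity, trace_fin_two, vecMul_diagonal]
  ring

theorem owalk_eq_openWalk (θ0 θ1 p : ℝ) :
    owalk θ0 θ1 p = openWalk (Pmat θ0 θ1) (Qmat θ0 θ1) (initState p) := by
  funext t
  induction t with
  | zero => rfl
  | succ t ih => funext x; simp only [owalk, openWalk, ih]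

theorem sum_mul_findprob (θ0 θ1 p : ℝ) (t : ℕ) (f : ℤ → ℝ) :
    ∑ x ∈ Icc (-(t : ℤ)) t, f x * findprob θ0 θ1 p t x =
      (walkExpect (Pmat θ0 θ1) (Qmat θ0 θ1) (initState p) t fun x => (f x : ℂ) • 1).re := by
  simp [walkExpect, findprob, owalk_eq_openWalk, re_sum]

theorem moment1_eq {θ0 θ1 : ℝ} (p : ℝ) (h : Real.cos θ0 = Real.sin θ0 * Real.sin θ1) (t : ℕ) :
    moment1 θ0 θ1 p t = meanVelocity θ0 θ1 p * t := by
  rw [moment1, sum_mul_findprob]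
  simp only [ofReal_intCast]
  rw [walkExpect_intCast_smul_one (Pmat_Qmat_trace_preserving θ0 θ1) (Qmat_sub_Pmat_eq_Wmat h)
    (Pmat_Qmat_dual_Wmat h), trace_Wmat_mul_initState, ← ofReal_natCast, ← ofReal_mul, ofReal_re,
    mul_comm]

theorem moment2_eq {θ0 θ1 : ℝ} (p : ℝ) (h : Real.cos θ0 = Real.sin θ0 * Real.sin θ1) (t : ℕ) :
    moment2 θ0 θ1 p t = secondMomentCoeff θ0 θ1 * t ^ 2 + (1 - secondMomentCoeff θ0 θ1) * t := by
  rw [moment2, sum_mul_findprob]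
  simp only [ofReal_pow, ofReal_intCast]
  rw [walkExpect_intCast_sq_smul_one (Pmat_Qmat_trace_preserving θ0 θ1) (Qmat_sub_Pmat_eq_Wmat h)
    (Pmat_Qmat_dual_Wmat h) (Qmat_sub_Pmat_dual_Wmat h), trace_initState, mul_one]
  norm_cast

theorem sqrt_secondMomentCoeff_sub_meanVelocity_sq (θ0 θ1 p : ℝ) :
    √(secondMomentCoeff θ0 θ1 - meanVelocity θ0 θ1 p ^ 2) = Real.sin θ0 ^ 2 * |Real.cos θ1| *
      √(1 + 3 * Real.sin θ1 ^ 2 - (2 * p - 1) ^ 2 * Real.cos θ1 ^ 2) := by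
  have factor : secondMomentCoeff θ0 θ1 - meanVelocity θ0 θ1 p ^ 2 =
      (Real.sin θ0 ^ 2 * |Real.cos θ1|) ^ 2 *
        (1 + 3 * Real.sin θ1 ^ 2 - (2 * p - 1) ^ 2 * Real.cos θ1 ^ 2) := by
    simp only [secondMomentCoeff, meanVelocity, mul_pow, sq_abs]
    ring
  rw [factor, Real.sqrt_mul (sq_nonneg _), Real.sqrt_sq (by positivity)]

theorem owalk_ballistic_general (θ0 θ1 p : ℝ)
    (h : Real.cos θ0 = Real.sin θ0 * Real.sin θ1) :
    Filter.Tendsto (fun t : ℕ => stdDev θ0 θ1 p t / (t : ℝ)) Filter.atTop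
      (nhds (Real.sin θ0 ^ 2 * |Real.cos θ1| *
        Real.sqrt (1 + 3 * Real.sin θ1 ^ 2 - (2 * p - 1) ^ 2 * Real.cos θ1 ^ 2))) := by
  have variance : ∀ t : ℕ, stdDev θ0 θ1 p t = √((secondMomentCoeff θ0 θ1 - meanVelocity θ0 θ1 p ^ 2)
      * t ^ 2 + (1 - secondMomentCoeff θ0 θ1) * t) := fun t => by
    rw [stdDev, moment1_eq p h, moment2_eq p h]
    congr 1
    ring
  rw [← sqrt_secondMomentCoeff_sub_meanVelocity_sq]
  simpa only [variance] using
    tendsto_sqrt_quadratic_div_atTop (secondMomentCoeff θ0 θ1 - meanVelocity θ0 θ1 p ^ 2)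
      (1 - secondMomentCoeff θ0 θ1)

theorem owalk_ballistic (θ0 θ1 p : ℝ) (hp0 : 0 ≤ p) (hp1 : p ≤ 1)
    (h : Real.cos θ0 = Real.sin θ0 * Real.sin θ1) (hc1 : Real.cos θ1 ≠ 0) :
    Filter.Tendsto (fun t : ℕ => stdDev θ0 θ1 p t / (t : ℝ)) Filter.atTop
      (nhds (Real.sin θ0 ^ 2 * |Real.cos θ1| *
        Real.sqrt (1 + 3 * Real.sin θ1 ^ 2 - (2 * p - 1) ^ 2 * Real.cos θ1 ^ 2))) :=
  owalk_ballistic_general θ0 θ1 p h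
end

section
/- Suppose sin θ0 · cos θ1 = 0 and cos θ0 ≠ sin θ0 · sin θ1. Then for every t ∈ ℕ the second moment satisfies: E₂(t) = 4·c0²·s0²·t if t is even, and E₂(t) = 4·c0²·s0²·t + (2·c0² − 1)² if t is odd, where c0 = cos θ0 and s0 = sin θ0. -/
open Matrix Complex Filter

/-! Under `sin θ0 cos θ1 = 0` both `P` and `Q` are antidiagonal, so the diagonal of `ρ t x`
evolves by itself, as a classical walk that steps by `±1` and swaps the two internal states at
every step, with weights `α = cos² θ0` and `β = (sin θ0 sin θ1)²`, where `α + β = 1`. For such a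
walk the moments close up: the mass is conserved, the first moment `D₁` of the difference of the
two states satisfies `D₁(t+1) = -D₁(t) - d` with `d = α - β = 2 cos² θ0 - 1`, and the second
moment satisfies `S₂(t+1) = S₂(t) + 2 d D₁(t) + 1`. So `D₁` alternates between `0` and `-d`, and
`S₂` grows by `1 - d² = 4 cos² θ0 sin² θ0` per step, plus `d²` at odd times. -/

open Finset

section Shift

variable {R : Type*}

lemma sum_Icc_mul_shift [NonUnitalNonAssocSemiring R] {t : ℕ} {g : ℤ → R}
    (hg : ∀ x ∉ Icc (-(t : ℤ)) t, g x = 0) (w : ℤ → R) {c : ℤ} (hc : |c| ≤ 1) :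
    ∑ x ∈ Icc (-((t + 1 : ℕ) : ℤ)) (t + 1 : ℕ), w x * g (x + c) =
      ∑ x ∈ Icc (-(t : ℤ)) t, w (x - c) * g x := by
  obtain ⟨hc₁, hc₂⟩ := abs_le.mp hc
  calc _ = ∑ x ∈ Icc (-((t + 1 : ℕ) : ℤ) + c) ((t + 1 : ℕ) + c), w (x - c) * g x := by
        rw [← map_add_right_Icc, sum_map]
        simp only [addRightEmbedding_apply, add_sub_cancel_right]
    _ = _ := by
        refine (sum_subset (Icc_subset_Icc (by push_cast; omega) (by push_cast; omega))
          fun x _ hx => ?_).symm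
        rw [hg x hx, mul_zero]

lemma sum_Icc_mul_step [CommSemiring R] {t : ℕ} {g : ℤ → R}
    (hg : ∀ x ∉ Icc (-(t : ℤ)) t, g x = 0) (w : ℤ → R) (a b : R) :
    ∑ x ∈ Icc (-((t + 1 : ℕ) : ℤ)) (t + 1 : ℕ), w x * (a * g (x + 1) + b * g (x - 1)) =
      ∑ x ∈ Icc (-(t : ℤ)) t, (a * w (x - 1) + b * w (x + 1)) * g x := by
  have h₁ := sum_Icc_mul_shift hg (fun x => a * w x) (c := 1) (by norm_num)
  have h₂ := sum_Icc_mul_shift hg (fun x => b * w x) (c := -1) (by norm_num)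
  simp only [sub_neg_eq_add, ← sub_eq_add_neg] at h₁ h₂
  simp only [mul_add, add_mul, sum_add_distrib, ← h₁, ← h₂]
  congr 1 <;> exact sum_congr rfl fun x _ => by ring

end Shift

/-- `u t x` and `v t x` are the weights of internal states 0 and 1 at position `x` and time `t`. -/
structure IsFlipWalk (α β : ℝ) (u v : ℕ → ℤ → ℝ) : Prop where
  init_u : ∀ x ≠ 0, u 0 x = 0
  init_v : ∀ x ≠ 0, v 0 x = 0
  step_u : ∀ t x, u (t + 1) x = α * v t (x + 1) + β * v t (x - 1)
  step_v : ∀ t x, v (t + 1) x = β * u t (x + 1) + α * u t (x - 1)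

noncomputable def posMoment (k t : ℕ) (f : ℤ → ℝ) : ℝ :=
  ∑ x ∈ Icc (-(t : ℤ)) t, (x : ℝ) ^ k * f x

namespace IsFlipWalk

variable {α β : ℝ} {u v : ℕ → ℤ → ℝ}

lemma support (hW : IsFlipWalk α β u v) (t : ℕ) :
    ∀ x ∉ Icc (-(t : ℤ)) t, u t x = 0 ∧ v t x = 0 := by
  induction t with
  | zero =>
    intro x hx
    have hx0 : x ≠ 0 := by rintro rfl; simp at hx
    exact ⟨hW.init_u x hx0, hW.init_v x hx0⟩
  | succ t ih =>
    intro x hx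
    simp only [mem_Icc, not_and_or, not_le] at hx
    have hl := ih (x + 1) (by simp only [mem_Icc]; push_cast at hx; omega)
    have hr := ih (x - 1) (by simp only [mem_Icc]; push_cast at hx; omega)
    simp [hW.step_u, hW.step_v, hl, hr]

lemma sum_u_succ (hW : IsFlipWalk α β u v) (t : ℕ) (w : ℤ → ℝ) :
    ∑ x ∈ Icc (-((t + 1 : ℕ) : ℤ)) (t + 1 : ℕ), w x * u (t + 1) x =
      ∑ x ∈ Icc (-(t : ℤ)) t, (α * w (x - 1) + β * w (x + 1)) * v t x := by
  simp only [hW.step_u]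
  exact sum_Icc_mul_step (fun x hx => (hW.support t x hx).2) w α β

lemma sum_v_succ (hW : IsFlipWalk α β u v) (t : ℕ) (w : ℤ → ℝ) :
    ∑ x ∈ Icc (-((t + 1 : ℕ) : ℤ)) (t + 1 : ℕ), w x * v (t + 1) x =
      ∑ x ∈ Icc (-(t : ℤ)) t, (β * w (x - 1) + α * w (x + 1)) * u t x := by
  simp only [hW.step_v]
  exact sum_Icc_mul_step (fun x hx => (hW.support t x hx).1) w β α

lemma posMoment_zero_succ (hW : IsFlipWalk α β u v) (hαβ : α + β = 1) (t : ℕ) :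
    posMoment 0 (t + 1) (u (t + 1) + v (t + 1)) = posMoment 0 t (u t + v t) := by
  simp only [posMoment, Pi.add_apply, mul_add, sum_add_distrib, hW.sum_u_succ, hW.sum_v_succ]
  rw [add_comm, ← sum_add_distrib, ← sum_add_distrib]
  refine sum_congr rfl fun x _ => ?_
  linear_combination (u t x + v t x) * hαβ

lemma posMoment_one_succ (hW : IsFlipWalk α β u v) (hαβ : α + β = 1) (t : ℕ) :
    posMoment 1 (t + 1) (u (t + 1) - v (t + 1)) =
      -posMoment 1 t (u t - v t) - (α - β) * posMoment 0 t (u t + v t) := by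
  simp only [posMoment, Pi.add_apply, Pi.sub_apply, mul_add, mul_sub, sum_sub_distrib,
    hW.sum_u_succ, hW.sum_v_succ, mul_sum]
  rw [neg_sub, ← sum_sub_distrib, ← sum_sub_distrib, ← sum_sub_distrib]
  refine sum_congr rfl fun x _ => ?_
  push_cast
  linear_combination (x * (v t x - u t x)) * hαβ

lemma posMoment_two_succ (hW : IsFlipWalk α β u v) (hαβ : α + β = 1) (t : ℕ) :
    posMoment 2 (t + 1) (u (t + 1) + v (t + 1)) =
      posMoment 2 t (u t + v t) + 2 * (α - β) * posMoment 1 t (u t - v t) +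
        posMoment 0 t (u t + v t) := by
  simp only [posMoment, Pi.add_apply, Pi.sub_apply, mul_add, sum_add_distrib,
    hW.sum_u_succ, hW.sum_v_succ, mul_sum]
  simp only [← sum_add_distrib]
  refine sum_congr rfl fun x _ => ?_
  push_cast
  linear_combination ((x ^ 2 + 1) * (u t x + v t x)) * hαβ

theorem posMoments_eq (hW : IsFlipWalk α β u v) (hαβ : α + β = 1)
    (hmass : u 0 0 + v 0 0 = 1) (t : ℕ) :
    posMoment 0 t (u t + v t) = 1 ∧
      posMoment 1 t (u t - v t) = ((-1) ^ t - 1) / 2 * (α - β) ∧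
      posMoment 2 t (u t + v t) = (1 - (α - β) ^ 2) * t + (1 - (-1) ^ t) / 2 * (α - β) ^ 2 := by
  induction t with
  | zero => simp [posMoment, hmass]
  | succ t ih =>
    obtain ⟨h₀, h₁, h₂⟩ := ih
    rw [hW.posMoment_zero_succ hαβ, hW.posMoment_one_succ hαβ, hW.posMoment_two_succ hαβ,
      h₀, h₁, h₂]
    refine ⟨rfl, by ring, by push_cast; ring⟩

end IsFlipWalk

lemma antidiag_conj_apply_zero_zero (a b : ℝ) (M : Matrix (Fin 2) (Fin 2) ℂ) :
    (!![0, (a : ℂ); (b : ℂ), 0] * M * (!![0, (a : ℂ); (b : ℂ), 0])ᴴ) 0 0 =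
      ((a ^ 2 : ℝ) : ℂ) * M 1 1 := by
  simp [Matrix.mul_apply, Fin.sum_univ_two, vecMul, dotProduct, sq, mul_comm, mul_assoc]

lemma antidiag_conj_apply_one_one (a b : ℝ) (M : Matrix (Fin 2) (Fin 2) ℂ) :
    (!![0, (a : ℂ); (b : ℂ), 0] * M * (!![0, (a : ℂ); (b : ℂ), 0])ᴴ) 1 1 =
      ((b ^ 2 : ℝ) : ℂ) * M 0 0 := by
  simp [Matrix.mul_apply, Fin.sum_univ_two, vecMul, dotProduct, sq, mul_comm, mul_assoc]

lemma Pmat_eq_antidiag {θ0 θ1 : ℝ} (hs : Real.sin θ0 * Real.cos θ1 = 0) :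
    Pmat θ0 θ1 = !![0, (Real.cos θ0 : ℂ); ((Real.sin θ0 * Real.sin θ1 : ℝ) : ℂ), 0] := by
  simp [Pmat, hs]

lemma Qmat_eq_antidiag {θ0 θ1 : ℝ} (hs : Real.sin θ0 * Real.cos θ1 = 0) :
    Qmat θ0 θ1 = !![0, ((Real.sin θ0 * Real.sin θ1 : ℝ) : ℂ); (Real.cos θ0 : ℂ), 0] := by
  simp [Qmat, hs]

noncomputable def owalkDiag (θ0 θ1 p : ℝ) (i : Fin 2) (t : ℕ) (x : ℤ) : ℝ :=
  (owalk θ0 θ1 p t x i i).re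

lemma owalk_isFlipWalk (θ0 θ1 p : ℝ) (hs : Real.sin θ0 * Real.cos θ1 = 0) :
    IsFlipWalk (Real.cos θ0 ^ 2) ((Real.sin θ0 * Real.sin θ1) ^ 2)
      (owalkDiag θ0 θ1 p 0) (owalkDiag θ0 θ1 p 1) where
  init_u x hx := by simp [owalkDiag, owalk, hx]
  init_v x hx := by simp [owalkDiag, owalk, hx]
  step_u t x := by
    simp only [owalkDiag, owalk, Pmat_eq_antidiag hs, Qmat_eq_antidiag hs, Matrix.add_apply,
      antidiag_conj_apply_zero_zero, Complex.add_re, Complex.re_ofReal_mul]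
  step_v t x := by
    simp only [owalkDiag, owalk, Pmat_eq_antidiag hs, Qmat_eq_antidiag hs, Matrix.add_apply,
      antidiag_conj_apply_one_one, Complex.add_re, Complex.re_ofReal_mul]

lemma moment2_eq_posMoment (θ0 θ1 p : ℝ) (t : ℕ) :
    moment2 θ0 θ1 p t =
      posMoment 2 t (owalkDiag θ0 θ1 p 0 t + owalkDiag θ0 θ1 p 1 t) := by
  simp only [moment2, posMoment, findprob, trace_fin_two, Complex.add_re, Pi.add_apply, owalkDiag]

theorem owalk_moment2_parity_general (θ0 θ1 p : ℝ)
    (hs : Real.sin θ0 * Real.cos θ1 = 0) :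
    ∀ t : ℕ,
      (Even t → moment2 θ0 θ1 p t = 4 * Real.cos θ0 ^ 2 * Real.sin θ0 ^ 2 * t) ∧
      (Odd t → moment2 θ0 θ1 p t =
        4 * Real.cos θ0 ^ 2 * Real.sin θ0 ^ 2 * t + (2 * Real.cos θ0 ^ 2 - 1) ^ 2) := by
  have hsum : Real.cos θ0 ^ 2 + (Real.sin θ0 * Real.sin θ1) ^ 2 = 1 := by
    linear_combination Real.sin_sq_add_cos_sq θ0 + Real.sin θ0 ^ 2 * Real.sin_sq_add_cos_sq θ1 -
      Real.sin θ0 * Real.cos θ1 * hs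
  have hdiff : Real.cos θ0 ^ 2 - (Real.sin θ0 * Real.sin θ1) ^ 2 = 2 * Real.cos θ0 ^ 2 - 1 := by
    linarith
  have hvar : 1 - (2 * Real.cos θ0 ^ 2 - 1) ^ 2 = 4 * Real.cos θ0 ^ 2 * Real.sin θ0 ^ 2 := by
    linear_combination -4 * Real.cos θ0 ^ 2 * Real.sin_sq_add_cos_sq θ0
  have hmass : owalkDiag θ0 θ1 p 0 0 0 + owalkDiag θ0 θ1 p 1 0 0 = 1 := by
    simp [owalkDiag, owalk]
  intro t
  have h := ((owalk_isFlipWalk θ0 θ1 p hs).posMoments_eq hsum hmass t).2.2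
  rw [hdiff, hvar] at h
  rw [moment2_eq_posMoment]
  exact ⟨fun he => by rw [h, he.neg_one_pow]; ring, fun ho => by rw [h, ho.neg_one_pow]; ring⟩

theorem owalk_moment2_parity (θ0 θ1 p : ℝ) (hp0 : 0 ≤ p) (hp1 : p ≤ 1)
    (hs : Real.sin θ0 * Real.cos θ1 = 0)
    (hne : Real.cos θ0 ≠ Real.sin θ0 * Real.sin θ1) :
    ∀ t : ℕ,
      (Even t → moment2 θ0 θ1 p t = 4 * Real.cos θ0 ^ 2 * Real.sin θ0 ^ 2 * t) ∧
      (Odd t → moment2 θ0 θ1 p t =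
        4 * Real.cos θ0 ^ 2 * Real.sin θ0 ^ 2 * t + (2 * Real.cos θ0 ^ 2 - 1) ^ 2) :=
  owalk_moment2_parity_general θ0 θ1 p hs
end

section
/- Suppose cos θ0 ≠ sin θ0 · sin θ1, sin θ0 · cos θ1 ≠ 0, and cos θ0 ≠ 0. Then the sequence E₂(t)/t converges, as t → ∞, to s0²·(c1² + 4·c0²·s1² + 4·c0·s0·s1·(c1² − 2·c0²·s1²))/(c0 − s0·s1)², where c0 = cos θ0, s0 = sin θ0, c1 = cos θ1, s1 = sin θ1. -/
/-!
The total trace of the walk is conserved, and, writing a = c0, b = s0·s1, c = s0·c1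
(so that a² + b² + c² = 1), the two first moments
U(t) = Σₓ x (ρ₀₀ - ρ₁₁) and V(t) = Σₓ x (ρ₀₁ + ρ₁₀) obey a closed affine recurrence
(U, V)(t+1) = K (U, V)(t) + β. The matrix K has trace τ = c² - a² - b² + 2ab and determinant
δ = -2ab, with 1 - τ + δ = 2(a - b)² and 1 + τ + δ = 2c²; by the hypotheses both are positive,
so both eigenvalues of K lie in the open unit disc and (U, V) converges to the fixed point.
Since E₂(t+1) - E₂(t) = 1 + 2(a² + c² - b²) U(t) + 4bc V(t), Cesàro averaging gives the limit
of E₂(t)/t.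
-/

open Matrix Complex Filter

open Filter Topology Finset

theorem le_add_mul_mul_pow_of_le_mul_add_mul_pow {s : ℕ → ℝ} {r C : ℝ} (hr : 0 ≤ r)
    (h : ∀ t, s (t + 1) ≤ r * s t + C * r ^ (t + 1)) (t : ℕ) :
    s t ≤ (s 0 + t * C) * r ^ t := by
  induction t with
  | zero => simp
  | succ t ih =>
    calc s (t + 1) ≤ r * s t + C * r ^ (t + 1) := h t
      _ ≤ r * ((s 0 + t * C) * r ^ t) + C * r ^ (t + 1) := by gcongr
      _ = (s 0 + (t + 1 : ℕ) * C) * r ^ (t + 1) := by push_cast; ring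

section NormedField

variable {𝕜 : Type*} [NormedField 𝕜]

theorem tendsto_zero_of_linear_recurrence {E : ℕ → 𝕜} {l₁ l₂ : 𝕜}
    (hE : ∀ t, E (t + 2) = (l₁ + l₂) * E (t + 1) - l₁ * l₂ * E t)
    (h₁ : ‖l₁‖ < 1) (h₂ : ‖l₂‖ < 1) : Tendsto E atTop (𝓝 0) := by
  set f : ℕ → 𝕜 := fun t => E (t + 1) - l₂ * E t
  have hf : ∀ t, f t = l₁ ^ t * f 0 := by
    intro t
    induction t with
    | zero => simp
    | succ t ih =>
      rw [pow_succ', mul_assoc, ← ih]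
      linear_combination hE t
  -- `r ≥ 1/2` only serves to keep `r` away from zero
  set r : ℝ := max (max ‖l₁‖ ‖l₂‖) (1 / 2)
  have hr₀ : 0 < r := lt_max_of_lt_right one_half_pos
  have hr₁ : r < 1 := max_lt (max_lt h₁ h₂) one_half_lt_one
  have hl₁ : ‖l₁‖ ≤ r := (le_max_left _ _).trans (le_max_left _ _)
  have hl₂ : ‖l₂‖ ≤ r := (le_max_right _ _).trans (le_max_left _ _)
  have hbound : ∀ t, ‖E t‖ ≤ (‖E 0‖ + t * (‖f 0‖ / r)) * r ^ t := by
    refine le_add_mul_mul_pow_of_le_mul_add_mul_pow hr₀.le fun t => ?_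
    calc ‖E (t + 1)‖ = ‖l₂ * E t + l₁ ^ t * f 0‖ := by rw [← hf]; simp [f]
      _ ≤ ‖l₂‖ * ‖E t‖ + ‖l₁‖ ^ t * ‖f 0‖ := by
        simpa only [norm_mul, norm_pow] using norm_add_le (l₂ * E t) (l₁ ^ t * f 0)
      _ ≤ r * ‖E t‖ + r ^ t * ‖f 0‖ := by gcongr
      _ = r * ‖E t‖ + ‖f 0‖ / r * r ^ (t + 1) := by field_simp; ring
  have hlim : Tendsto (fun t : ℕ => (‖E 0‖ + t * (‖f 0‖ / r)) * r ^ t) atTop (𝓝 0) := by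
    have h := ((tendsto_pow_atTop_nhds_zero_of_lt_one hr₀.le hr₁).const_mul ‖E 0‖).add
      ((tendsto_self_mul_const_pow_of_lt_one hr₀.le hr₁).const_mul (‖f 0‖ / r))
    simp only [mul_zero, add_zero] at h
    exact h.congr fun t => by ring
  exact squeeze_zero_norm hbound hlim

theorem tendsto_of_affine_recurrence {u v : ℕ → 𝕜} {k₁₁ k₁₂ k₂₁ k₂₂ β₁ β₂ u₀ v₀ l₁ l₂ : 𝕜}
    (hu : ∀ t, u (t + 1) = k₁₁ * u t + k₁₂ * v t + β₁)
    (hv : ∀ t, v (t + 1) = k₂₁ * u t + k₂₂ * v t + β₂)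
    (hu₀ : u₀ = k₁₁ * u₀ + k₁₂ * v₀ + β₁) (hv₀ : v₀ = k₂₁ * u₀ + k₂₂ * v₀ + β₂)
    (hsum : l₁ + l₂ = k₁₁ + k₂₂) (hprod : l₁ * l₂ = k₁₁ * k₂₂ - k₁₂ * k₂₁)
    (h₁ : ‖l₁‖ < 1) (h₂ : ‖l₂‖ < 1) :
    Tendsto u atTop (𝓝 u₀) ∧ Tendsto v atTop (𝓝 v₀) := by
  -- Cayley–Hamilton: the deviations from the fixed point obey the characteristic recurrence
  have hdu : Tendsto (fun t => u t - u₀) atTop (𝓝 0) :=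
    tendsto_zero_of_linear_recurrence (fun t => by
      rw [hsum, hprod]
      linear_combination hu (t + 1) - hu₀ + k₁₂ * (hv t - hv₀) - k₂₂ * (hu t - hu₀)) h₁ h₂
  have hdv : Tendsto (fun t => v t - v₀) atTop (𝓝 0) :=
    tendsto_zero_of_linear_recurrence (fun t => by
      rw [hsum, hprod]
      linear_combination hv (t + 1) - hv₀ + k₂₁ * (hu t - hu₀) - k₁₁ * (hv t - hv₀)) h₁ h₂
  exact ⟨by simpa using hdu.add_const u₀, by simpa using hdv.add_const v₀⟩

end NormedField

theorem exists_roots_norm_lt_one_of_jury {τ δ : ℝ} (h₁ : 0 < 1 - τ + δ) (h₂ : 0 < 1 + τ + δ)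
    (h₃ : δ < 1) :
    ∃ l₁ l₂ : ℂ, l₁ + l₂ = τ ∧ l₁ * l₂ = δ ∧ ‖l₁‖ < 1 ∧ ‖l₂‖ < 1 := by
  rcases le_or_gt 0 (τ ^ 2 - 4 * δ) with hΔ | hΔ
  · obtain ⟨s, hs⟩ : ∃ s : ℝ, s ^ 2 = τ ^ 2 - 4 * δ := ⟨_, Real.sq_sqrt hΔ⟩
    have hnorm : ∀ σ : ℝ, σ ^ 2 = s ^ 2 → ‖(((τ + σ) / 2 : ℝ) : ℂ)‖ < 1 := fun σ hσ => by
      rw [Complex.norm_real, Real.norm_eq_abs, abs_lt]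
      constructor <;> nlinarith [sq_abs σ, abs_nonneg σ]
    refine ⟨((τ + s) / 2 : ℝ), ((τ + -s) / 2 : ℝ), ?_, ?_, hnorm s rfl, hnorm (-s) (neg_sq s)⟩
    · push_cast; ring
    · rw [← Complex.ofReal_mul]; congr 1; linear_combination -hs / 4
  · obtain ⟨s, hs⟩ : ∃ s : ℝ, s ^ 2 = 4 * δ - τ ^ 2 := ⟨_, Real.sq_sqrt (by linarith)⟩
    have hnorm : ∀ σ : ℝ, σ ^ 2 = s ^ 2 → ‖(τ / 2 : ℂ) + (σ / 2 : ℝ) * Complex.I‖ < 1 :=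
      fun σ hσ => by
        rw [← sq_lt_one_iff₀ (norm_nonneg _), Complex.sq_norm, ← Complex.ofReal_ofNat,
          ← Complex.ofReal_div, Complex.normSq_add_mul_I]
        nlinarith
    refine ⟨(τ / 2 : ℂ) + (s / 2 : ℝ) * Complex.I, (τ / 2 : ℂ) + (-s / 2 : ℝ) * Complex.I,
      ?_, ?_, hnorm s rfl, hnorm (-s) (neg_sq s)⟩
    · push_cast; ring
    · have hsC : (s : ℂ) ^ 2 = 4 * δ - τ ^ 2 := by exact_mod_cast hs
      push_cast
      linear_combination (-(s : ℂ) ^ 2 / 4) * Complex.I_sq + hsC / 4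

theorem tendsto_div_natCast_of_tendsto_sub {m : ℕ → ℝ} {α : ℝ}
    (h : Tendsto (fun t => m (t + 1) - m t) atTop (𝓝 α)) :
    Tendsto (fun t : ℕ => m t / t) atTop (𝓝 α) := by
  have hsplit : ∀ t : ℕ,
      m t / t = m 0 * (t : ℝ)⁻¹ + (t : ℝ)⁻¹ * ∑ i ∈ range t, (m (i + 1) - m i) := fun t => by
    rw [sum_range_sub]
    ring
  simpa [hsplit] using (tendsto_inv_atTop_nhds_zero_nat.const_mul (m 0)).add h.cesaro

theorem tendsto_secondMoment_increment {U V : ℕ → ℂ} {a b c : ℝ}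
    (hpy : a ^ 2 + b ^ 2 + c ^ 2 = 1) (hab : a ≠ b) (hc : c ≠ 0)
    (hU : ∀ t, U (t + 1) = (c ^ 2 - a ^ 2 - b ^ 2 : ℂ) * U t + 2 * b * c * V t
      + (b ^ 2 + c ^ 2 - a ^ 2))
    (hV : ∀ t, V (t + 1) = (2 * a * c : ℂ) * U t + 2 * a * b * V t + 2 * a * c) :
    Tendsto (fun t => (2 * (a ^ 2 + c ^ 2 - b ^ 2) : ℂ) * U t + 4 * b * c * V t + 1) atTop
      (𝓝 (((c ^ 2 + 4 * a ^ 2 * b ^ 2 + 4 * a * b * c ^ 2 - 8 * a ^ 3 * b ^ 3) / (a - b) ^ 2 : ℝ)))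
    := by
  have hab' : a - b ≠ 0 := sub_ne_zero.mpr hab
  set u₀ : ℝ := (1 + 2 * b ^ 2) * (1 - 2 * a * b) / (2 * (a - b) ^ 2) - 1 with hu₀_def
  set v₀ : ℝ := a * c * (1 + 2 * b ^ 2) / (a - b) ^ 2 with hv₀_def
  have hu₀ : u₀ = (c ^ 2 - a ^ 2 - b ^ 2) * u₀ + 2 * b * c * v₀ + (b ^ 2 + c ^ 2 - a ^ 2) := by
    rw [hu₀_def, hv₀_def]
    field_simp
    linear_combination (-(1 + 2 * b ^ 2) * (1 + 2 * a * b)) * hpy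
  have hv₀ : v₀ = 2 * a * c * u₀ + 2 * a * b * v₀ + 2 * a * c := by
    rw [hu₀_def, hv₀_def]
    field_simp
    ring
  have hδ : (c ^ 2 - a ^ 2 - b ^ 2) * (2 * a * b) - 2 * b * c * (2 * a * c) = -2 * a * b := by
    linear_combination (-2 * a * b) * hpy
  obtain ⟨l₁, l₂, hsum, hprod, h₁, h₂⟩ :=
    exists_roots_norm_lt_one_of_jury (τ := c ^ 2 - a ^ 2 - b ^ 2 + 2 * a * b) (δ := -2 * a * b)
      (by nlinarith [pow_pos (sq_pos_of_ne_zero hab') 1])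
      (by nlinarith [sq_pos_of_ne_zero hc])
      (by nlinarith [sq_nonneg (a + b), sq_pos_of_ne_zero hc])
  obtain ⟨hUlim, hVlim⟩ := tendsto_of_affine_recurrence hU hV
    (u₀ := (u₀ : ℂ)) (v₀ := (v₀ : ℂ)) (l₁ := l₁) (l₂ := l₂)
    (by exact_mod_cast hu₀) (by exact_mod_cast hv₀)
    (by rw [hsum]; push_cast; ring) (by rw [hprod, ← hδ]; push_cast; ring) h₁ h₂
  have hval : 2 * (a ^ 2 + c ^ 2 - b ^ 2) * u₀ + 4 * b * c * v₀ + 1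
      = (c ^ 2 + 4 * a ^ 2 * b ^ 2 + 4 * a * b * c ^ 2 - 8 * a ^ 3 * b ^ 3) / (a - b) ^ 2 := by
    rw [hu₀_def, hv₀_def]
    field_simp
    linear_combination (2 * a * (b * (1 + 2 * b ^ 2) - a)) * hpy
  rw [← hval]
  push_cast
  exact ((hUlim.const_mul _).add (hVlim.const_mul _)).add_const 1

-- In one step the walker at `w` moves to `w - 1` through `P` and to `w + 1` through `Q`.
section KrausPair

variable {R : Type*} [CommRing R] (a b c w : R) (X : Matrix (Fin 2) (Fin 2) R)

theorem kraus_trace :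
    (!![0, a; b, -c] * X * !![0, a; b, -c]ᵀ).trace + (!![c, b; a, 0] * X * !![c, b; a, 0]ᵀ).trace
      = (a ^ 2 + b ^ 2 + c ^ 2) * X.trace := by
  simp only [trace_fin_two, mul_apply, transpose_apply, of_apply, cons_val_zero, cons_val_one,
    cons_val_fin_one, Fin.sum_univ_two]
  ring

theorem kraus_diag :
    (w - 1) * ((!![0, a; b, -c] * X * !![0, a; b, -c]ᵀ) 0 0
        - (!![0, a; b, -c] * X * !![0, a; b, -c]ᵀ) 1 1)
      + (w + 1) * ((!![c, b; a, 0] * X * !![c, b; a, 0]ᵀ) 0 0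
        - (!![c, b; a, 0] * X * !![c, b; a, 0]ᵀ) 1 1)
      = (c ^ 2 - a ^ 2 - b ^ 2) * (w * (X 0 0 - X 1 1)) + 2 * b * c * (w * (X 0 1 + X 1 0))
        + (b ^ 2 + c ^ 2 - a ^ 2) * X.trace := by
  simp only [trace_fin_two, mul_apply, transpose_apply, of_apply, cons_val_zero, cons_val_one,
    cons_val_fin_one, Fin.sum_univ_two]
  ring

theorem kraus_offDiag :
    (w - 1) * ((!![0, a; b, -c] * X * !![0, a; b, -c]ᵀ) 0 1
        + (!![0, a; b, -c] * X * !![0, a; b, -c]ᵀ) 1 0)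
      + (w + 1) * ((!![c, b; a, 0] * X * !![c, b; a, 0]ᵀ) 0 1
        + (!![c, b; a, 0] * X * !![c, b; a, 0]ᵀ) 1 0)
      = 2 * a * c * (w * (X 0 0 - X 1 1)) + 2 * a * b * (w * (X 0 1 + X 1 0))
        + 2 * a * c * X.trace := by
  simp only [trace_fin_two, mul_apply, transpose_apply, of_apply, cons_val_zero, cons_val_one,
    cons_val_fin_one, Fin.sum_univ_two]
  ring

theorem kraus_secondMoment :
    (w - 1) ^ 2 * (!![0, a; b, -c] * X * !![0, a; b, -c]ᵀ).trace
      + (w + 1) ^ 2 * (!![c, b; a, 0] * X * !![c, b; a, 0]ᵀ).trace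
      = (a ^ 2 + b ^ 2 + c ^ 2) * (w ^ 2 * X.trace + X.trace)
        + 2 * (a ^ 2 + c ^ 2 - b ^ 2) * (w * (X 0 0 - X 1 1))
        + 4 * b * c * (w * (X 0 1 + X 1 0)) := by
  simp only [trace_fin_two, mul_apply, transpose_apply, of_apply, cons_val_zero, cons_val_one,
    cons_val_fin_one, Fin.sum_univ_two]
  ring

end KrausPair

theorem sum_Icc_comp_add_of_eq_zero {M : Type*} [AddCommMonoid M] {f : ℤ → M} {t : ℕ}
    (hf : ∀ x, (t : ℤ) < |x| → f x = 0) {k : ℤ} (hk : |k| ≤ 1) :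
    ∑ x ∈ Icc (-((t + 1 : ℕ) : ℤ)) ((t + 1 : ℕ) : ℤ), f (x + k) = ∑ x ∈ Icc (-(t : ℤ)) t, f x := by
  have hsupp : ∀ x, f x ≠ 0 → |x| ≤ t := fun x hx => not_lt.mp (mt (hf x) hx)
  rw [← finsum_eq_sum_of_support_subset _ fun x hx => ?_,
    ← finsum_eq_sum_of_support_subset _ fun x hx => ?_]
  · exact finsum_comp_equiv (Equiv.addRight k)
  · have := abs_le.mp (hsupp x hx)
    simp only [coe_Icc, Set.mem_Icc]
    omega
  · have := abs_le.mp (hsupp _ hx)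
    have := abs_le.mp hk
    simp only [coe_Icc, Set.mem_Icc]
    push_cast
    omega

theorem cos_sq_add_sin_mul_sin_sq_add_sin_mul_cos_sq (θ0 θ1 : ℝ) :
    Real.cos θ0 ^ 2 + (Real.sin θ0 * Real.sin θ1) ^ 2 + (Real.sin θ0 * Real.cos θ1) ^ 2 = 1 := by
  linear_combination Real.cos_sq_add_sin_sq θ0 + Real.sin θ0 ^ 2 * Real.cos_sq_add_sin_sq θ1

section Walk

variable (θ0 θ1 p : ℝ)

local notation "a" => (Real.cos θ0 : ℂ)
local notation "b" => ((Real.sin θ0 * Real.sin θ1 : ℝ) : ℂ)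
local notation "c" => ((Real.sin θ0 * Real.cos θ1 : ℝ) : ℂ)

theorem kraus_coeff_sq_sum : a ^ 2 + b ^ 2 + c ^ 2 = 1 := by
  exact_mod_cast cos_sq_add_sin_mul_sin_sq_add_sin_mul_cos_sq θ0 θ1

theorem Pmat_conjTranspose : (Pmat θ0 θ1)ᴴ = (Pmat θ0 θ1)ᵀ := by
  ext i j
  fin_cases i <;> fin_cases j <;>
    simp [Pmat, Complex.conj_ofReal, -Complex.ofReal_cos, -Complex.ofReal_sin, -Complex.ofReal_mul]

theorem Qmat_conjTranspose : (Qmat θ0 θ1)ᴴ = (Qmat θ0 θ1)ᵀ := by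
  ext i j
  fin_cases i <;> fin_cases j <;>
    simp [Qmat, Complex.conj_ofReal, -Complex.ofReal_cos, -Complex.ofReal_sin, -Complex.ofReal_mul]

theorem owalk_eq_zero_of_lt_abs {t : ℕ} {x : ℤ} (h : (t : ℤ) < |x|) : owalk θ0 θ1 p t x = 0 := by
  induction t generalizing x with
  | zero => simp [owalk, show x ≠ 0 by simpa using h]
  | succ t ih =>
    have hx := lt_abs.mp h
    push_cast at hx
    rw [owalk, ih (lt_abs.mpr (by omega)), ih (lt_abs.mpr (by omega))]
    simp

noncomputable def walkSum (t : ℕ) (φ : ℤ → Matrix (Fin 2) (Fin 2) ℂ → ℂ) : ℂ :=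
  ∑ x ∈ Icc (-(t : ℤ)) t, φ x (owalk θ0 θ1 p t x)

theorem walkSum_succ (t : ℕ) (φ : ℤ → Matrix (Fin 2) (Fin 2) ℂ → ℂ)
    (hφ : ∀ x A B, φ x (A + B) = φ x A + φ x B) :
    walkSum θ0 θ1 p (t + 1) φ = walkSum θ0 θ1 p t fun y X =>
      φ (y - 1) (Pmat θ0 θ1 * X * (Pmat θ0 θ1)ᴴ) + φ (y + 1) (Qmat θ0 θ1 * X * (Qmat θ0 θ1)ᴴ) := by
  have hφ₀ : ∀ x, φ x 0 = 0 := fun x => by simpa using hφ x 0 0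
  have hρ : ∀ y, (t : ℤ) < |y| → owalk θ0 θ1 p t y = 0 := fun y => owalk_eq_zero_of_lt_abs θ0 θ1 p
  simp only [walkSum, owalk, hφ, sum_add_distrib]
  congr 1
  · simpa using sum_Icc_comp_add_of_eq_zero (k := 1)
      (f := fun y => φ (y - 1) (Pmat θ0 θ1 * owalk θ0 θ1 p t y * (Pmat θ0 θ1)ᴴ))
      (fun y hy => by simp [hρ y hy, hφ₀]) (by simp)
  · simpa [← sub_eq_add_neg] using sum_Icc_comp_add_of_eq_zero (k := -1)
      (f := fun y => φ (y + 1) (Qmat θ0 θ1 * owalk θ0 θ1 p t y * (Qmat θ0 θ1)ᴴ))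
      (fun y hy => by simp [hρ y hy, hφ₀]) (by simp)

noncomputable def walkTrace (t : ℕ) : ℂ := walkSum θ0 θ1 p t fun _ X => X.trace

noncomputable def walkDiag (t : ℕ) : ℂ := walkSum θ0 θ1 p t fun x X => x * (X 0 0 - X 1 1)

noncomputable def walkOffDiag (t : ℕ) : ℂ := walkSum θ0 θ1 p t fun x X => x * (X 0 1 + X 1 0)

noncomputable def walkSecondMoment (t : ℕ) : ℂ := walkSum θ0 θ1 p t fun x X => x ^ 2 * X.trace

theorem walkTrace_eq_one (t : ℕ) : walkTrace θ0 θ1 p t = 1 := by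
  induction t with
  | zero => simp [walkTrace, walkSum, owalk, trace_fin_two]
  | succ t ih =>
    rw [← ih, walkTrace, walkSum_succ _ _ _ _ _ fun _ => trace_add]
    simp only [walkTrace, walkSum]
    refine sum_congr rfl fun y _ => ?_
    rw [Pmat_conjTranspose, Qmat_conjTranspose, Pmat, Qmat, kraus_trace, kraus_coeff_sq_sum,
      one_mul]

theorem walkDiag_succ (t : ℕ) :
    walkDiag θ0 θ1 p (t + 1) = (c ^ 2 - a ^ 2 - b ^ 2) * walkDiag θ0 θ1 p t
      + 2 * b * c * walkOffDiag θ0 θ1 p t + (b ^ 2 + c ^ 2 - a ^ 2) := by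
  have hstep : walkDiag θ0 θ1 p (t + 1) = (c ^ 2 - a ^ 2 - b ^ 2) * walkDiag θ0 θ1 p t
      + 2 * b * c * walkOffDiag θ0 θ1 p t + (b ^ 2 + c ^ 2 - a ^ 2) * walkTrace θ0 θ1 p t := by
    rw [walkDiag, walkSum_succ _ _ _ _ _ fun x A B => by simp only [Matrix.add_apply]; ring]
    simp only [walkSum, walkDiag, walkOffDiag, walkTrace, mul_sum, ← sum_add_distrib]
    refine sum_congr rfl fun y _ => ?_
    rw [Pmat_conjTranspose, Qmat_conjTranspose, Int.cast_sub, Int.cast_add, Int.cast_one]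
    exact kraus_diag _ _ _ _ _
  rwa [walkTrace_eq_one, mul_one] at hstep

theorem walkOffDiag_succ (t : ℕ) :
    walkOffDiag θ0 θ1 p (t + 1) = 2 * a * c * walkDiag θ0 θ1 p t
      + 2 * a * b * walkOffDiag θ0 θ1 p t + 2 * a * c := by
  have hstep : walkOffDiag θ0 θ1 p (t + 1) = 2 * a * c * walkDiag θ0 θ1 p t
      + 2 * a * b * walkOffDiag θ0 θ1 p t + 2 * a * c * walkTrace θ0 θ1 p t := by
    rw [walkOffDiag, walkSum_succ _ _ _ _ _ fun x A B => by simp only [Matrix.add_apply]; ring]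
    simp only [walkSum, walkDiag, walkOffDiag, walkTrace, mul_sum, ← sum_add_distrib]
    refine sum_congr rfl fun y _ => ?_
    rw [Pmat_conjTranspose, Qmat_conjTranspose, Int.cast_sub, Int.cast_add, Int.cast_one]
    exact kraus_offDiag _ _ _ _ _
  rwa [walkTrace_eq_one, mul_one] at hstep

theorem walkSecondMoment_succ (t : ℕ) :
    walkSecondMoment θ0 θ1 p (t + 1) = walkSecondMoment θ0 θ1 p t
      + 2 * (a ^ 2 + c ^ 2 - b ^ 2) * walkDiag θ0 θ1 p t + 4 * b * c * walkOffDiag θ0 θ1 p t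
      + 1 := by
  have hstep : walkSecondMoment θ0 θ1 p (t + 1) = walkSecondMoment θ0 θ1 p t
      + 2 * (a ^ 2 + c ^ 2 - b ^ 2) * walkDiag θ0 θ1 p t + 4 * b * c * walkOffDiag θ0 θ1 p t
      + walkTrace θ0 θ1 p t := by
    rw [walkSecondMoment, walkSum_succ _ _ _ _ _ fun x A B => by rw [trace_add, mul_add]]
    simp only [walkSum, walkDiag, walkOffDiag, walkTrace, walkSecondMoment, mul_sum,
      ← sum_add_distrib]
    refine sum_congr rfl fun y _ => ?_
    rw [Pmat_conjTranspose, Qmat_conjTranspose, Int.cast_sub, Int.cast_add, Int.cast_one]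
    refine (kraus_secondMoment _ _ _ _ _).trans ?_
    rw [kraus_coeff_sq_sum]
    ring
  rwa [walkTrace_eq_one] at hstep

theorem moment2_eq_re_walkSecondMoment (t : ℕ) :
    moment2 θ0 θ1 p t = (walkSecondMoment θ0 θ1 p t).re := by
  simp only [moment2, walkSecondMoment, walkSum, findprob, Complex.re_sum]
  refine sum_congr rfl fun x _ => ?_
  rw [← Complex.re_ofReal_mul]
  push_cast
  rfl

end Walk

theorem owalk_moment2_over_t_limit_general (θ0 θ1 p : ℝ)
    (hne : Real.cos θ0 ≠ Real.sin θ0 * Real.sin θ1)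
    (hsc : Real.sin θ0 * Real.cos θ1 ≠ 0) :
    Filter.Tendsto (fun t : ℕ => moment2 θ0 θ1 p t / (t : ℝ)) Filter.atTop
      (nhds (Real.sin θ0 ^ 2 *
        (Real.cos θ1 ^ 2 + 4 * Real.cos θ0 ^ 2 * Real.sin θ1 ^ 2
          + 4 * Real.cos θ0 * Real.sin θ0 * Real.sin θ1 *
            (Real.cos θ1 ^ 2 - 2 * Real.cos θ0 ^ 2 * Real.sin θ1 ^ 2)) /
        (Real.cos θ0 - Real.sin θ0 * Real.sin θ1) ^ 2)) := by
  have hinc := tendsto_secondMoment_increment (cos_sq_add_sin_mul_sin_sq_add_sin_mul_cos_sq θ0 θ1)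
    hne hsc (walkDiag_succ θ0 θ1 p) (walkOffDiag_succ θ0 θ1 p)
  have hre : Tendsto (fun t => moment2 θ0 θ1 p (t + 1) - moment2 θ0 θ1 p t) atTop _ :=
    ((Complex.continuous_re.tendsto _).comp hinc).congr fun t => by
      rw [moment2_eq_re_walkSecondMoment, moment2_eq_re_walkSecondMoment, walkSecondMoment_succ,
        ← Complex.sub_re, Function.comp_apply]
      ring_nf
  rw [Complex.ofReal_re] at hre
  convert tendsto_div_natCast_of_tendsto_sub hre using 2
  ring

theorem owalk_moment2_over_t_limit (θ0 θ1 p : ℝ) (hp0 : 0 ≤ p) (hp1 : p ≤ 1)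
    (hne : Real.cos θ0 ≠ Real.sin θ0 * Real.sin θ1)
    (hsc : Real.sin θ0 * Real.cos θ1 ≠ 0) (hc0 : Real.cos θ0 ≠ 0) :
    Filter.Tendsto (fun t : ℕ => moment2 θ0 θ1 p t / (t : ℝ)) Filter.atTop
      (nhds (Real.sin θ0 ^ 2 *
        (Real.cos θ1 ^ 2 + 4 * Real.cos θ0 ^ 2 * Real.sin θ1 ^ 2
          + 4 * Real.cos θ0 * Real.sin θ0 * Real.sin θ1 *
            (Real.cos θ1 ^ 2 - 2 * Real.cos θ0 ^ 2 * Real.sin θ1 ^ 2)) /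
        (Real.cos θ0 - Real.sin θ0 * Real.sin θ1) ^ 2)) :=
  owalk_moment2_over_t_limit_general θ0 θ1 p hne hsc
end
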